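/- In the decorated logic for states L_sta, the strong equation update ∘ lookup ≡ id_unit is derivable (the fundamental strong equation for states). -/
import Mathlib


/-! The decorated logic for states `L_sta`: types in `Ty`, with a unit type `Un`
(written `1` in the paper) and a distinguished type `V` of values; `Sig` is a
signature of pure operations. `lookup : 1 → V` is an accessor and
`update : V → 1` is a modifier. -/

inductive StTm (Ty : Type) (V Un : Ty) (Sig : Ty → Ty → Type) : Ty → Ty → Type where
  | id (X : Ty) : StTm Ty V Un Sig X X
  | comp {X Y Z : Ty} (g : StTm Ty V Un Sig Y Z) (f : StTm Ty V Un Sig X Y) :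
      StTm Ty V Un Sig X Z
  | gen {X Y : Ty} (s : Sig X Y) : StTm Ty V Un Sig X Y
  | toUnit (X : Ty) : StTm Ty V Un Sig X Un
  | lookup : StTm Ty V Un Sig Un V
  | update : StTm Ty V Un Sig V Un

variable {Ty : Type} {V Un : Ty} {Sig : Ty → Ty → Type}

/-- The pure terms of `L_sta`. -/
inductive StPure : ∀ {X Y : Ty}, StTm Ty V Un Sig X Y → Prop where
  | id (X : Ty) : StPure (StTm.id X)
  | comp {X Y Z : Ty} {g : StTm Ty V Un Sig Y Z} {f : StTm Ty V Un Sig X Y} :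
      StPure g → StPure f → StPure (StTm.comp g f)
  | gen {X Y : Ty} (s : Sig X Y) : StPure (StTm.gen (V := V) (Un := Un) s)
  | toUnit (X : Ty) : StPure (StTm.toUnit (V := V) (Sig := Sig) X)

/-- The accessors of `L_sta`: terms not containing `update` (all terms are modifiers). -/
inductive StAcc : ∀ {X Y : Ty}, StTm Ty V Un Sig X Y → Prop where
  | id (X : Ty) : StAcc (StTm.id X)
  | comp {X Y Z : Ty} {g : StTm Ty V Un Sig Y Z} {f : StTm Ty V Un Sig X Y} :
      StAcc g → StAcc f → StAcc (StTm.comp g f)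
  | gen {X Y : Ty} (s : Sig X Y) : StAcc (StTm.gen (V := V) (Un := Un) s)
  | toUnit (X : Ty) : StAcc (StTm.toUnit (V := V) (Sig := Sig) X)
  | lookup : StAcc (StTm.lookup (Sig := Sig))

/-- A decorated equation of `L_sta`: a pair of parallel terms with a `Bool`,
`true` for strong (`≡`), `false` for weak (`∼`). -/
def StEqn (Ty : Type) (V Un : Ty) (Sig : Ty → Ty → Type) : Type :=
  Σ X : Ty, Σ Y : Ty, (StTm Ty V Un Sig X Y × StTm Ty V Un Sig X Y) × Bool

mutual
/-- Derivable strong equations of `L_sta` from the axiom set `Ax`. -/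
inductive StSEq (Ax : Set (StEqn Ty V Un Sig)) :
    ∀ {X Y : Ty}, StTm Ty V Un Sig X Y → StTm Ty V Un Sig X Y → Prop where
  | ax {X Y : Ty} {f g : StTm Ty V Un Sig X Y} :
      (⟨X, Y, (f, g), true⟩ : StEqn Ty V Un Sig) ∈ Ax → StSEq Ax f g
  | refl {X Y : Ty} (f : StTm Ty V Un Sig X Y) : StSEq Ax f f
  | symm {X Y : Ty} {f g : StTm Ty V Un Sig X Y} : StSEq Ax f g → StSEq Ax g f
  | trans {X Y : Ty} {f g h : StTm Ty V Un Sig X Y} :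
      StSEq Ax f g → StSEq Ax g h → StSEq Ax f h
  | subs {X Y Z : Ty} (u : StTm Ty V Un Sig X Y) {v₁ v₂ : StTm Ty V Un Sig Y Z} :
      StSEq Ax v₁ v₂ → StSEq Ax (v₁.comp u) (v₂.comp u)
  | repl {X Y Z : Ty} {v₁ v₂ : StTm Ty V Un Sig X Y} (w : StTm Ty V Un Sig Y Z) :
      StSEq Ax v₁ v₂ → StSEq Ax (w.comp v₁) (w.comp v₂)
  | idLeft {X Y : Ty} (f : StTm Ty V Un Sig X Y) : StSEq Ax ((StTm.id Y).comp f) f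
  | idRight {X Y : Ty} (f : StTm Ty V Un Sig X Y) : StSEq Ax (f.comp (StTm.id X)) f
  | assoc {W X Y Z : Ty} (h : StTm Ty V Un Sig Y Z) (g : StTm Ty V Un Sig X Y)
      (f : StTm Ty V Un Sig W X) : StSEq Ax ((h.comp g).comp f) (h.comp (g.comp f))
  -- (unit): an accessor `X → 1` is strongly equal to `⟨⟩_X`
  | unitAcc {X : Ty} {f : StTm Ty V Un Sig X Un} : StAcc f → StSEq Ax f (StTm.toUnit X)
  -- (eq₁): a weak equation between accessors is strong
  | eq₁ {X Y : Ty} {f g : StTm Ty V Un Sig X Y} :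
      StAcc f → StAcc g → StWEq Ax f g → StSEq Ax f g
  -- (eq₂)
  | eq₂ {X Y : Ty} {f g : StTm Ty V Un Sig X Y} :
      StWEq Ax f g → StSEq Ax ((StTm.toUnit Y).comp f) ((StTm.toUnit Y).comp g) →
      StSEq Ax f g
  -- (eq₃)
  | eq₃ {X : Ty} {f g : StTm Ty V Un Sig X Un} :
      StWEq Ax (StTm.lookup.comp f) (StTm.lookup.comp g) → StSEq Ax f g

/-- Derivable weak equations of `L_sta` from the axiom set `Ax`. -/
inductive StWEq (Ax : Set (StEqn Ty V Un Sig)) :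
    ∀ {X Y : Ty}, StTm Ty V Un Sig X Y → StTm Ty V Un Sig X Y → Prop where
  | ax {X Y : Ty} {f g : StTm Ty V Un Sig X Y} :
      (⟨X, Y, (f, g), false⟩ : StEqn Ty V Un Sig) ∈ Ax → StWEq Ax f g
  | symm {X Y : Ty} {f g : StTm Ty V Un Sig X Y} : StWEq Ax f g → StWEq Ax g f
  | trans {X Y : Ty} {f g h : StTm Ty V Un Sig X Y} :
      StWEq Ax f g → StWEq Ax g h → StWEq Ax f h
  -- (subs_∼): substitution by arbitrary terms
  | subs {X Y Z : Ty} (u : StTm Ty V Un Sig X Y) {v₁ v₂ : StTm Ty V Un Sig Y Z} :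
      StWEq Ax v₁ v₂ → StWEq Ax (v₁.comp u) (v₂.comp u)
  -- (repl_∼): replacement only by pure terms
  | replPure {X Y Z : Ty} {v₁ v₂ : StTm Ty V Un Sig X Y} {w : StTm Ty V Un Sig Y Z} :
      StPure w → StWEq Ax v₁ v₂ → StWEq Ax (w.comp v₁) (w.comp v₂)
  -- (unit_∼)
  | unit {X : Ty} (f : StTm Ty V Un Sig X Un) : StWEq Ax f (StTm.toUnit X)
  -- (≡-to-∼)
  | ofStrong {X Y : Ty} {f g : StTm Ty V Un Sig X Y} : StSEq Ax f g → StWEq Ax f g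
  -- (ax): lookup ∘ update ∼ id_V
  | lookup_update : StWEq Ax ((StTm.lookup (Sig := Sig)).comp StTm.update) (StTm.id V)
end

/-- `Ax` is a pure (strong) theory. -/
def StPureAx (Ax : Set (StEqn Ty V Un Sig)) : Prop :=
  ∀ e ∈ Ax, StPure e.2.2.1.1 ∧ StPure e.2.2.1.2 ∧ e.2.2.2 = true

/-- In the decorated logic for states `L_sta`, the strong equation
`update ∘ lookup ≡ id_1` is derivable (the fundamental strong equation for states). -/
theorem sta_update_lookup (Ax : Set (StEqn Ty V Un Sig)) (hAx : StPureAx Ax) :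
    StSEq Ax ((StTm.update (Sig := Sig)).comp StTm.lookup) (StTm.id Un) := by
  apply StSEq.eq₃
  have h1 : StWEq Ax (StTm.lookup.comp ((StTm.update (Sig := Sig)).comp StTm.lookup))
      ((StTm.lookup.comp StTm.update).comp StTm.lookup) :=
    StWEq.ofStrong ((StSEq.assoc _ _ _).symm)
  have h2 : StWEq Ax ((StTm.lookup.comp StTm.update).comp StTm.lookup)
      ((StTm.id V).comp (StTm.lookup (Sig := Sig))) :=
    StWEq.subs _ StWEq.lookup_update
  have h3 : StWEq Ax ((StTm.id V).comp (StTm.lookup (Sig := Sig)))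
      (StTm.lookup.comp (StTm.id Un)) :=
    StWEq.ofStrong ((StSEq.idLeft _).trans (StSEq.idRight _).symm)
  exact (h1.trans h2).trans h3
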